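/- Let v¹,…,vⁿ be an orthonormal basis of ℝⁿ, d₀, d₁ ∈ ℝⁿ, α₁,…,αₙ > 0, λ ∈ (0,1), and μᵢ ∈ [0,1] with 1 - (1-λ)αᵢ^λ ≤ μᵢ ≤ λαᵢ^(λ-1). With E_λ and d_λ as before, if (E_0 + d₀) ∩ (E_1 + d₁) ∩ ∂(E_λ + d_λ) is nonempty then d₀ = d₁. -/

import Mathlib

/-!
Write `a i`, `b i` for the coordinates of `x - d₀`, `x - d₁` along `v i`. The coordinates of
`x - d_λ` are `(1 - μ i) a i + μ i b i`, and after dividing by `α i ^ λ` this reads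
`p a i + q (b i / α i)` with weights `p ≤ 1 - λ`, `q ≤ λ`: this is what the bounds on `μ` say.
By convexity of the square each term of the `E_λ`-sum is then at most
`(1 - λ) (a i)² + λ (b i / α i)²`, whose sum is at most `1` when `x ∈ (E₀ + d₀) ∩ (E₁ + d₁)`.
On the boundary of `E_λ + d_λ` all these inequalities are equalities. Equality in a coordinate
forces `a i = b i = 0` unless `p + q = 1`, and `p + q = 1` forces `α i = 1`, `μ i = λ` by the
strict weighted AM-GM inequality `α ^ (1 - λ) < (1 - λ) α + λ`; in that case `a i = b i`
because `(1 - λ) u² + λ w² - ((1 - λ) u + λ w)² = λ (1 - λ) (u - w)²`.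
-/

open scoped RealInnerProductSpace Pointwise

/-- The geometric mean ellipsoid `E_l` with principal axes `v i` and half-lengths `(α i)^l`. -/
def meanEllipsoid {n : ℕ} (v : Fin n → EuclideanSpace ℝ (Fin n)) (α : Fin n → ℝ) (l : ℝ) :
    Set (EuclideanSpace ℝ (Fin n)) :=
  {x | ∑ i, ⟪x, v i⟫ ^ 2 / (α i) ^ (2 * l) ≤ 1}

section ConvexCombination

variable {l p q u w : ℝ}

lemma sq_add_le_add_mul_add (hp : 0 ≤ p) (hq : 0 ≤ q) :
    (p * u + q * w) ^ 2 ≤ (p + q) * (p * u ^ 2 + q * w ^ 2) := by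
  nlinarith [mul_nonneg (mul_nonneg hp hq) (sq_nonneg (u - w))]

lemma mul_add_sq_le_of_le (hpl : p ≤ 1 - l) (hql : q ≤ l) :
    p * u ^ 2 + q * w ^ 2 ≤ (1 - l) * u ^ 2 + l * w ^ 2 := by
  nlinarith [mul_le_mul_of_nonneg_right hpl (sq_nonneg u),
    mul_le_mul_of_nonneg_right hql (sq_nonneg w)]

lemma sq_add_le_of_le_weights (hp : 0 ≤ p) (hq : 0 ≤ q) (hpl : p ≤ 1 - l) (hql : q ≤ l) :
    (p * u + q * w) ^ 2 ≤ (1 - l) * u ^ 2 + l * w ^ 2 := by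
  have hpq : p + q ≤ 1 := by linarith
  have hS : 0 ≤ p * u ^ 2 + q * w ^ 2 := by positivity
  calc (p * u + q * w) ^ 2 ≤ (p + q) * (p * u ^ 2 + q * w ^ 2) := sq_add_le_add_mul_add hp hq
    _ ≤ p * u ^ 2 + q * w ^ 2 := mul_le_of_le_one_left hS hpq
    _ ≤ (1 - l) * u ^ 2 + l * w ^ 2 := mul_add_sq_le_of_le hpl hql

lemma eq_zero_of_sq_add_eq_of_add_lt_one (hl₀ : 0 < l) (hl₁ : l < 1) (hp : 0 ≤ p) (hq : 0 ≤ q)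
    (hpl : p ≤ 1 - l) (hql : q ≤ l) (hpq : p + q < 1)
    (h : (p * u + q * w) ^ 2 = (1 - l) * u ^ 2 + l * w ^ 2) : u = 0 ∧ w = 0 := by
  have hT : (1 - (p + q)) * ((1 - l) * u ^ 2 + l * w ^ 2) ≤ 0 := by
    nlinarith [sq_add_le_add_mul_add (u := u) (w := w) hp hq,
      mul_add_sq_le_of_le (u := u) (w := w) hpl hql]
  have hT₀ : (1 - l) * u ^ 2 + l * w ^ 2 ≤ 0 :=
    nonpos_of_mul_nonpos_right hT (by linarith)
  have hu : (1 - l) * u ^ 2 = 0 := by nlinarith [sq_nonneg u, sq_nonneg w]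
  have hw : l * w ^ 2 = 0 := by nlinarith [sq_nonneg u, sq_nonneg w]
  simpa [hl₀.ne', (sub_pos.2 hl₁).ne'] using And.intro hu hw

lemma eq_of_sq_convex_comb_eq (hl₀ : 0 < l) (hl₁ : l < 1)
    (h : ((1 - l) * u + l * w) ^ 2 = (1 - l) * u ^ 2 + l * w ^ 2) : u = w := by
  have h' : l * (1 - l) * (u - w) ^ 2 = 0 := by linear_combination -h
  have hsq : (u - w) ^ 2 = 0 :=
    (mul_eq_zero.mp h').resolve_left (mul_pos hl₀ (sub_pos.2 hl₁)).ne'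
  exact sub_eq_zero.mp (pow_eq_zero_iff two_ne_zero |>.mp hsq)

end ConvexCombination

lemma Real.eq_one_of_rpow_one_sub_eq {α l : ℝ} (hα : 0 < α) (hl₀ : 0 < l) (hl₁ : l < 1)
    (h : α ^ (1 - l) = (1 - l) * α + l) : α = 1 := by
  by_contra hne
  have := rpow_one_add_lt_one_add_mul_self (s := α - 1) (by linarith) (sub_ne_zero.2 hne)
    (sub_pos.2 hl₁) (by linarith)
  rw [add_sub_cancel, h] at this
  linarith

lemma add_mul_lt_rpow_or_eq_one {α l μ : ℝ} (hα : 0 < α) (hl₀ : 0 < l) (hl₁ : l < 1)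
    (h₁ : 1 - μ ≤ (1 - l) * α ^ l) (h₂ : μ * α ≤ l * α ^ l) :
    (1 - μ) + μ * α < α ^ l ∨ (α = 1 ∧ μ = l) := by
  by_cases h : 1 - μ = (1 - l) * α ^ l ∧ μ * α = l * α ^ l
  · obtain ⟨h₁, h₂⟩ := h
    have hX : 0 < α ^ l := Real.rpow_pos_of_pos hα l
    have hsplit : α ^ (1 - l) * α ^ l = α := by
      rw [← Real.rpow_add hα, sub_add_cancel, Real.rpow_one]
    have hα₁ : α = 1 := by
      refine Real.eq_one_of_rpow_one_sub_eq hα hl₀ hl₁ (mul_right_cancel₀ hX.ne' ?_)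
      linear_combination hsplit + α * h₁ + h₂
    subst hα₁
    right
    simp only [Real.one_rpow, mul_one] at h₂
    exact ⟨rfl, h₂⟩
  · left
    rw [not_and_or] at h
    rcases h with h | h
    · linarith [lt_of_le_of_ne h₁ h]
    · linarith [lt_of_le_of_ne h₂ h]

lemma sq_comb_div_rpow_eq {α : ℝ} (hα : 0 < α) (l μ a b : ℝ) :
    ((1 - μ) * a + μ * b) ^ 2 / α ^ (2 * l)
      = ((1 - μ) / α ^ l * a + μ * α / α ^ l * (b / α)) ^ 2 := by
  have hX : 0 < α ^ l := Real.rpow_pos_of_pos hα l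
  rw [mul_comm 2 l, Real.rpow_mul hα.le, Real.rpow_two]
  field_simp

lemma sq_comb_div_rpow_le {α l μ : ℝ} (hα : 0 < α) (hμ₀ : 0 ≤ μ) (hμ₁ : μ ≤ 1)
    (h₁ : 1 - μ ≤ (1 - l) * α ^ l) (h₂ : μ * α ≤ l * α ^ l) (a b : ℝ) :
    ((1 - μ) * a + μ * b) ^ 2 / α ^ (2 * l) ≤ (1 - l) * a ^ 2 + l * (b / α) ^ 2 := by
  have hX : 0 < α ^ l := Real.rpow_pos_of_pos hα l
  rw [sq_comb_div_rpow_eq hα]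
  exact sq_add_le_of_le_weights (by have := sub_nonneg.2 hμ₁; positivity) (by positivity)
    ((div_le_iff₀ hX).2 h₁) ((div_le_iff₀ hX).2 h₂)

lemma eq_of_sq_comb_div_rpow_eq {α l μ a b : ℝ} (hα : 0 < α) (hl₀ : 0 < l) (hl₁ : l < 1)
    (hμ₀ : 0 ≤ μ) (hμ₁ : μ ≤ 1) (h₁ : 1 - μ ≤ (1 - l) * α ^ l) (h₂ : μ * α ≤ l * α ^ l)
    (h : ((1 - μ) * a + μ * b) ^ 2 / α ^ (2 * l) = (1 - l) * a ^ 2 + l * (b / α) ^ 2) :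
    a = b := by
  have hX : 0 < α ^ l := Real.rpow_pos_of_pos hα l
  rcases add_mul_lt_rpow_or_eq_one hα hl₀ hl₁ h₁ h₂ with hlt | ⟨rfl, rfl⟩
  · rw [sq_comb_div_rpow_eq hα] at h
    obtain ⟨rfl, hb⟩ := eq_zero_of_sq_add_eq_of_add_lt_one hl₀ hl₁
      (by have := sub_nonneg.2 hμ₁; positivity) (by positivity)
      ((div_le_iff₀ hX).2 h₁) ((div_le_iff₀ hX).2 h₂)
      (by rw [← add_div, div_lt_one hX]; exact hlt) h
    exact ((div_eq_zero_iff.mp hb).resolve_right hα.ne').symm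
  · simp only [Real.one_rpow, div_one] at h
    exact eq_of_sq_convex_comb_eq hl₀ hl₁ h

lemma mul_le_mul_rpow_of_le_mul_rpow_sub_one {α l μ : ℝ} (hα : 0 < α)
    (h : μ ≤ l * α ^ (l - 1)) : μ * α ≤ l * α ^ l := by
  have := mul_le_mul_of_nonneg_right h hα.le
  rwa [mul_assoc, ← Real.rpow_add_one hα.ne', sub_add_cancel] at this

lemma eq_of_sum_sq_comb_div_rpow_eq_one {ι : Type*} [Fintype ι] {α μ a b : ι → ℝ} {l : ℝ}
    (hα : ∀ i, 0 < α i) (hl₀ : 0 < l) (hl₁ : l < 1) (hμ : ∀ i, μ i ∈ Set.Icc (0 : ℝ) 1)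
    (h₁ : ∀ i, 1 - μ i ≤ (1 - l) * α i ^ l) (h₂ : ∀ i, μ i * α i ≤ l * α i ^ l)
    (ha : ∑ i, a i ^ 2 ≤ 1) (hb : ∑ i, (b i / α i) ^ 2 ≤ 1)
    (h : ∑ i, ((1 - μ i) * a i + μ i * b i) ^ 2 / α i ^ (2 * l) = 1) : a = b := by
  have hle : ∀ i ∈ Finset.univ, ((1 - μ i) * a i + μ i * b i) ^ 2 / α i ^ (2 * l)
      ≤ (1 - l) * a i ^ 2 + l * (b i / α i) ^ 2 := fun i _ =>
    sq_comb_div_rpow_le (hα i) (hμ i).1 (hμ i).2 (h₁ i) (h₂ i) _ _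
  have hsum : ∑ i, ((1 - μ i) * a i + μ i * b i) ^ 2 / α i ^ (2 * l)
      = ∑ i, ((1 - l) * a i ^ 2 + l * (b i / α i) ^ 2) := by
    refine le_antisymm (Finset.sum_le_sum hle) ?_
    rw [h, Finset.sum_add_distrib, ← Finset.mul_sum, ← Finset.mul_sum]
    nlinarith
  funext i
  exact eq_of_sq_comb_div_rpow_eq (hα i) hl₀ hl₁ (hμ i).1 (hμ i).2 (h₁ i) (h₂ i)
    ((Finset.sum_eq_sum_iff_of_le hle).mp hsum i (Finset.mem_univ i))

lemma Set.mem_add_singleton_iff_sub_mem {G : Type*} [AddGroup G] {s : Set G} {d y : G} :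
    y ∈ s + {d} ↔ y - d ∈ s := by
  rw [Set.add_singleton, Set.image_add_right, Set.mem_preimage, sub_eq_add_neg]

section MeanEllipsoid

variable {n : ℕ} (v : Fin n → EuclideanSpace ℝ (Fin n)) (α : Fin n → ℝ) (l : ℝ)

lemma meanEllipsoid_add_singleton (d : EuclideanSpace ℝ (Fin n)) :
    meanEllipsoid v α l + {d} = {y | ∑ i, ⟪y - d, v i⟫ ^ 2 / (α i) ^ (2 * l) ≤ 1} := by
  ext y
  exact Set.mem_add_singleton_iff_sub_mem

lemma sum_eq_one_of_mem_frontier {d y : EuclideanSpace ℝ (Fin n)}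
    (hy : y ∈ frontier (meanEllipsoid v α l + {d})) :
    ∑ i, ⟪y - d, v i⟫ ^ 2 / (α i) ^ (2 * l) = 1 := by
  rw [meanEllipsoid_add_singleton] at hy
  exact frontier_le_subset_eq (f := fun y => ∑ i, ⟪y - d, v i⟫ ^ 2 / (α i) ^ (2 * l))
    (by fun_prop) continuous_const hy

end MeanEllipsoid

theorem stmt_11 {n : ℕ} (v : Fin n → EuclideanSpace ℝ (Fin n))
    (hv : Orthonormal ℝ v) (hv' : Submodule.span ℝ (Set.range v) = ⊤)
    (d₀ d₁ : EuclideanSpace ℝ (Fin n))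
    (α : Fin n → ℝ) (hα : ∀ i, 0 < α i) (l : ℝ) (hl : l ∈ Set.Ioo (0:ℝ) 1)
    (μ : Fin n → ℝ) (hμ : ∀ i, μ i ∈ Set.Icc (0:ℝ) 1)
    (hμ1 : ∀ i, 1 - (1 - l) * (α i) ^ l ≤ μ i) (hμ2 : ∀ i, μ i ≤ l * (α i) ^ (l - 1))
    (dl : EuclideanSpace ℝ (Fin n))
    (hdl : dl = ∑ i, ((1 - μ i) * ⟪d₀, v i⟫ + μ i * ⟪d₁, v i⟫) • v i)
    (hne : ((meanEllipsoid v α 0 + ({d₀} : Set (EuclideanSpace ℝ (Fin n)))) ∩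
        (meanEllipsoid v α 1 + ({d₁} : Set (EuclideanSpace ℝ (Fin n)))) ∩
        frontier (meanEllipsoid v α l + ({dl} : Set (EuclideanSpace ℝ (Fin n))))).Nonempty) :
    d₀ = d₁ := by
  obtain ⟨x, ⟨hx₀, hx₁⟩, hx⟩ := hne
  rw [meanEllipsoid_add_singleton] at hx₀ hx₁
  have hcoord : ∀ i, ⟪x - dl, v i⟫ = (1 - μ i) * ⟪x - d₀, v i⟫ + μ i * ⟪x - d₁, v i⟫ := by
    intro i
    simp only [inner_sub_left, hdl, hv.inner_left_fintype, conj_trivial]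
    ring
  have hab := eq_of_sum_sq_comb_div_rpow_eq_one (a := fun i => ⟪x - d₀, v i⟫)
    (b := fun i => ⟪x - d₁, v i⟫) hα hl.1 hl.2 hμ (fun i => by linarith [hμ1 i])
    (fun i => mul_le_mul_rpow_of_le_mul_rpow_sub_one (hα i) (hμ2 i))
    (by simpa using hx₀) (by simpa [div_pow] using hx₁)
    (by simpa only [hcoord] using sum_eq_one_of_mem_frontier v α l hx)
  refine InnerProductSpace.ext_inner_left_basis (Module.Basis.mk hv.linearIndependent hv'.ge)
    fun i => ?_
  simpa [real_inner_comm, inner_sub_left] using congr_fun hab i
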